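/- arXiv:2204.13017 — 2 statements merged into one kernel-verified Lean document; each statement's English description precedes it below -/
import Mathlib

section
/- For the modified Szabo bulk modulus κ = κ0/(1 + (−i·ωR·τ)^(β−1)) with κ0 > 0, τ > 0, ωR > 0 and 0 < β < 1, writing γ = 1 − β ∈ (0,1) we have (−i·ωR·τ)^(β−1) = (ωR·τ)^(−γ)·(cos(γπ/2) + i·sin(γπ/2)), the denominator 1 + (−i·ωR·τ)^(β−1) has positive real part and positive imaginary part, and consequently Im(κ) < 0 and Re(κ) > 0. -/
open Complex Real

theorem stmt_13 (κ0 τ ωR β : ℝ) (hκ0 : 0 < κ0) (hτ : 0 < τ) (hω : 0 < ωR)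
    (hβ0 : 0 < β) (hβ1 : β < 1) :
    (-I * (ωR * τ)) ^ ((β : ℂ) - 1)
        = ((ωR * τ) ^ (-(1 - β)) : ℝ) *
            ((Real.cos ((1 - β) * π / 2) : ℂ) + I * Real.sin ((1 - β) * π / 2)) ∧
    0 < (1 + (-I * (ωR * τ)) ^ ((β : ℂ) - 1)).re ∧
    0 < (1 + (-I * (ωR * τ)) ^ ((β : ℂ) - 1)).im ∧
    0 < ((κ0 : ℂ) / (1 + (-I * (ωR * τ)) ^ ((β : ℂ) - 1))).re ∧
    ((κ0 : ℂ) / (1 + (-I * (ωR * τ)) ^ ((β : ℂ) - 1))).im < 0 := by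
  set x : ℝ := ωR * τ with hx
  have hx0 : 0 < x := mul_pos hω hτ
  simp only [show ((ωR:ℂ) * (τ:ℂ)) = (x:ℂ) from by push_cast [hx]; ring]
  have hz : (-I * (x : ℂ)) ≠ 0 := by
    simp [Complex.ext_iff, hx0.ne']
  have hlog : Complex.log (-I * (x : ℂ)) = Real.log x + (-(π/2)) * I := by
    rw [Complex.log]
    congr 1
    · rw [show -I * (x:ℂ) = (x:ℂ) * (-I) by ring]
      simp [Complex.norm_def, Complex.normSq, hx0.le, abs_of_pos hx0]
    · rw [show -I * (x:ℂ) = (x:ℂ) * (-I) by ring, Complex.arg_real_mul _ hx0,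
        Complex.arg_neg_I]
      push_cast
      ring
  set θ : ℝ := (1 - β) * π / 2 with hθ
  have heq : (-I * (x : ℂ)) ^ ((β : ℂ) - 1)
      = ((x ^ (-(1 - β)) : ℝ) : ℂ) *
          ((Real.cos θ : ℂ) + I * Real.sin θ) := by
    rw [Complex.cpow_def_of_ne_zero hz, hlog]
    have : ((β : ℂ) - 1) * ((Real.log x : ℂ) + (-(π/2)) * I)
        = ((((β - 1) * Real.log x : ℝ)) : ℂ) + (θ : ℝ) * I := by
      push_cast [hθ]; ring
    rw [mul_comm ((Real.log x : ℂ) + (-(π/2)) * I) ((β:ℂ) - 1)]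
    rw [this, Complex.exp_add, Complex.exp_mul_I]
    have h1 : Complex.exp (((β - 1) * Real.log x : ℝ) : ℂ)
        = ((x ^ (-(1 - β)) : ℝ) : ℂ) := by
      rw [← Complex.ofReal_exp]
      congr 1
      rw [Real.rpow_def_of_pos hx0]
      ring_nf
    rw [h1]
    push_cast
    ring
  have hθ0 : 0 < θ := by
    have : 0 < (1 - β) := by linarith
    positivity
  have hθ1 : θ < π / 2 := by
    have hπ : 0 < π := Real.pi_pos
    rw [hθ]
    nlinarith
  have hcos : 0 < Real.cos θ := Real.cos_pos_of_mem_Ioo ⟨by linarith [Real.pi_pos], hθ1⟩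
  have hsin : 0 < Real.sin θ := Real.sin_pos_of_pos_of_lt_pi hθ0 (by linarith [Real.pi_pos, Real.pi_gt_three])
  have hr : (0:ℝ) < x ^ (-(1 - β)) := Real.rpow_pos_of_pos hx0 _
  set D : ℂ := 1 + (-I * (x : ℂ)) ^ ((β : ℂ) - 1) with hD
  have hDre : 0 < D.re := by
    rw [hD, heq]
    simp
    positivity
  have hDim : 0 < D.im := by
    rw [hD, heq]
    simp
    positivity
  have hnsq : 0 < Complex.normSq D := by
    apply Complex.normSq_pos.2
    intro h
    rw [h] at hDre; simp at hDre
  refine ⟨heq, hDre, hDim, ?_, ?_⟩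
  · rw [Complex.div_re]
    simp only [Complex.ofReal_re, Complex.ofReal_im, zero_mul, zero_div, add_zero]
    positivity
  · rw [Complex.div_im]
    simp only [Complex.ofReal_re, Complex.ofReal_im, zero_mul, zero_div, zero_sub]
    have : 0 < κ0 * D.im / Complex.normSq D := by positivity
    linarith
end

section
/- For the modified Szabo model, the quality factor Q := Re(κ)/(−Im(κ)) equals ((ωR·τ)^(1−β) + cos((1−β)π/2))/sin((1−β)π/2); in particular Q is strictly increasing as a function of ωR > 0. -/
open Complex Real

lemma cpow_negI (x β : ℝ) (hx : 0 < x) :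
    (-I * (x:ℂ)) ^ ((β : ℂ) - 1)
      = (x ^ (β - 1) : ℝ) * Complex.exp ((((1-β) * π / 2 : ℝ)) * I) := by
  have hz : (-I * (x:ℂ)) ≠ 0 := by
    simp [Complex.ext_iff, hx.ne']
  have harg : Complex.arg (-I * (x:ℂ)) = -(π/2) := by
    rw [Complex.arg_eq_neg_pi_div_two_iff]
    simp [Complex.ext_iff, hx]
  have habs : ‖(-I * (x:ℂ))‖ = x := by
    simp [abs_of_pos hx]
  have hlog : Complex.log (-I * (x:ℂ)) = (Real.log x : ℂ) - (π/2 : ℝ) * I := by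
    rw [Complex.log, harg, habs]
    push_cast
    ring
  rw [Complex.cpow_def_of_ne_zero hz, hlog]
  have : ((Real.log x : ℂ) - (π/2 : ℝ) * I) * ((β : ℂ) - 1)
      = ((β - 1) * Real.log x : ℝ) + (((1-β) * π / 2 : ℝ)) * I := by
    push_cast; ring
  rw [this, Complex.exp_add]
  congr 1
  rw [← Complex.ofReal_exp]
  norm_cast
  rw [Real.rpow_def_of_pos hx, mul_comm]

theorem stmt_14 (κ0 τ β : ℝ) (hκ0 : 0 < κ0) (hτ : 0 < τ)
    (hβ0 : 0 < β) (hβ1 : β < 1) :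
    (∀ ωR : ℝ, 0 < ωR →
      ((κ0 : ℂ) / (1 + (-I * (ωR * τ)) ^ ((β : ℂ) - 1))).re /
        (-((κ0 : ℂ) / (1 + (-I * (ωR * τ)) ^ ((β : ℂ) - 1))).im)
      = ((ωR * τ) ^ (1 - β) + Real.cos ((1 - β) * π / 2)) /
          Real.sin ((1 - β) * π / 2)) ∧
    StrictMonoOn (fun ωR : ℝ =>
      ((κ0 : ℂ) / (1 + (-I * (ωR * τ)) ^ ((β : ℂ) - 1))).re /
        (-((κ0 : ℂ) / (1 + (-I * (ωR * τ)) ^ ((β : ℂ) - 1))).im))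
      (Set.Ioi 0) := by
  have hθ0 : 0 < (1-β) * π / 2 :=
    div_pos (mul_pos (by linarith) Real.pi_pos) two_pos
  have hθ1 : (1-β) * π / 2 < π / 2 := by
    have : (1-β) * π < 1 * π := by
      apply mul_lt_mul_of_pos_right _ Real.pi_pos
      linarith
    linarith
  have hc : 0 < Real.cos ((1-β) * π / 2) :=
    Real.cos_pos_of_mem_Ioo ⟨by linarith [Real.pi_pos], hθ1⟩
  have hs : 0 < Real.sin ((1-β) * π / 2) :=
    Real.sin_pos_of_pos_of_lt_pi hθ0 (by linarith [Real.pi_pos])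
  have key : ∀ ωR : ℝ, 0 < ωR →
      ((κ0 : ℂ) / (1 + (-I * (ωR * τ)) ^ ((β : ℂ) - 1))).re /
        (-((κ0 : ℂ) / (1 + (-I * (ωR * τ)) ^ ((β : ℂ) - 1))).im)
      = ((ωR * τ) ^ (1 - β) + Real.cos ((1 - β) * π / 2)) /
          Real.sin ((1 - β) * π / 2) := by
    intro ωR hω
    have hx : 0 < ωR * τ := mul_pos hω hτ
    set x := ωR * τ with hxdef
    set c := Real.cos ((1-β) * π / 2)
    set s := Real.sin ((1-β) * π / 2)
    have hr : 0 < x ^ (β - 1) := Real.rpow_pos_of_pos hx _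
    set r := x ^ (β - 1) with hrdef
    have hpow : (-I * (x:ℂ)) ^ ((β : ℂ) - 1) = (r : ℂ) * ((c : ℝ) + (s : ℝ) * I) := by
      rw [cpow_negI x β hx, Complex.exp_mul_I, ← Complex.ofReal_cos, ← Complex.ofReal_sin]
    rw [show ((ωR : ℂ) * τ) = (x : ℂ) by norm_cast, hpow]
    have hre : ((1 : ℂ) + (r : ℂ) * (c + s * I)).re = 1 + r * c := by simp
    have him : ((1 : ℂ) + (r : ℂ) * (c + s * I)).im = r * s := by simp
    have hN : 0 < Complex.normSq (1 + (r : ℂ) * (c + s * I)) := by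
      rw [Complex.normSq_pos]
      intro h
      have h2 := congrArg Complex.im h
      rw [him] at h2
      simp only [Complex.zero_im] at h2
      nlinarith
    rw [Complex.div_re, Complex.div_im, hre, him]
    simp only [Complex.ofReal_re, Complex.ofReal_im]
    set N := Complex.normSq (1 + (r : ℂ) * (c + s * I))
    have h1 : (κ0 * (1 + r * c) / N + 0 * (r * s) / N) /
        -(0 * (1 + r * c) / N - κ0 * (r * s) / N)
        = (1 + r * c) / (r * s) := by
      field_simp
      ring
    rw [h1]
    have hrs : x ^ (1 - β) * r = 1 := by
      rw [hrdef, ← Real.rpow_add hx]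
      norm_num
    have h2 : 1 + r * c = r * (x ^ (1 - β) + c) := by
      have : r * x ^ (1 - β) = 1 := by linarith [hrs, mul_comm (x ^ (1-β)) r]
      nlinarith [this]
    rw [h2, mul_div_mul_left _ _ (ne_of_gt hr)]
  refine ⟨key, ?_⟩
  intro a ha b hb hab
  simp only [Set.mem_Ioi] at ha hb
  dsimp only
  rw [key a ha, key b hb]
  have hlt : (a * τ) ^ (1 - β) < (b * τ) ^ (1 - β) :=
    Real.rpow_lt_rpow (by positivity) (mul_lt_mul_of_pos_right hab hτ) (by linarith)
  apply (div_lt_div_iff_of_pos_right hs).mpr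
  linarith
end
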